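/- Suppose Assumptions (S1) (with α = 1) and (S3) hold with some q ≥ 1, the kernel assumption holds, and K is symmetric (K(−x) = K(x)). Then there exist a constant C > 0 and a function η : (0,1) → [0,∞) with η(b) → 0 as b → 0 such that for all n ∈ ℕ and b ∈ (0,1) with nb ≥ 1: sup_{u ∈ [b/2, 1−b/2]} | (1/n) Σ_{t=1}^n K_b(t/n − u) (E X̃_t(t/n) − E X̃_0(u)) | ≤ η(b) · b + C n^{−1}. -/

import Mathlib

open MeasureTheory Filter Set Topology

noncomputable section

/-- The two-sided shift on `ℤ → ℝ`. -/
def shiftZ : (ℤ → ℝ) → (ℤ → ℝ) := fun x t => x (t + 1)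

/-- Stationarity and ergodicity of a real-valued process indexed by `ℤ`. -/
def StatErg {Ω : Type*} [MeasurableSpace Ω] (μ : Measure Ω) (X : ℤ → Ω → ℝ) : Prop :=
  Ergodic shiftZ (Measure.map (fun ω t => X t ω) μ)

/-- The localizing-kernel assumption. -/
structure KernelAssumption (K : ℝ → ℝ) (Kinf BK : ℝ) : Prop where
  pos : 0 < Kinf
  bound : ∀ x, |K x| ≤ Kinf
  bv : eVariationOn K Set.univ ≤ ENNReal.ofReal BK
  supp : Function.support K ⊆ Set.Icc (-(1/2) : ℝ) (1/2)
  int_one : (∫ x, K x) = 1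

/-!
By stationarity `E X̃_t(t/n) = g(t/n)` with `g v = E X̃_0(v)`, and (S3) together with dominated
convergence makes `g` continuously differentiable on `[0,1]` with `g' = E ∂_u X̃_0`. Expanding
`g(t/n) - g(u) = g'(u) (t/n - u) + r_t`, the kernel localizes to `|t/n - u| ≤ b/2`, where
`|r_t| ≤ m(b) b/2` for the modulus of continuity `m` of `g'`; this gives the `η(b) b` term.
The linear term is `g'(u)` times the Riemann sum of `x ↦ K_b(x - u) (x - u)`, whose integral over
`[0,1]` vanishes by the symmetry of `K`, and whose total variation is bounded uniformly in `b`;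
so that Riemann sum is `O(1/n)`.
-/

lemma shiftZ_iterate_apply (k : ℕ) (x : ℤ → ℝ) (t : ℤ) : shiftZ^[k] x t = x (t + k) := by
  induction k generalizing x t with
  | zero => simp
  | succ k ih =>
    rw [Function.iterate_succ_apply, ih]
    simp only [shiftZ, Nat.cast_succ, add_assoc]

lemma StatErg.integral_natCast_eq {Ω : Type*} [MeasurableSpace Ω] {μ : Measure Ω}
    {Y : ℤ → Ω → ℝ} (hY : StatErg μ Y) (hY_meas : ∀ t, Measurable (Y t)) (k : ℕ) :
    ∫ ω, Y k ω ∂μ = ∫ ω, Y 0 ω ∂μ := by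
  set ν := μ.map fun ω t => Y t ω
  have hΦ : Measurable fun ω t => Y t ω := measurable_pi_lambda _ hY_meas
  have hshift := hY.toMeasurePreserving.iterate k
  have h_eval (s : ℤ) : ∫ ω, Y s ω ∂μ = ∫ x, x s ∂ν :=
    (integral_map hΦ.aemeasurable (measurable_pi_apply s).aestronglyMeasurable).symm
  calc ∫ ω, Y k ω ∂μ = ∫ x, shiftZ^[k] x 0 ∂ν := by simp [h_eval, shiftZ_iterate_apply]
    _ = ∫ x, x 0 ∂(ν.map shiftZ^[k]) := (integral_map hshift.measurable.aemeasurable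
      (measurable_pi_apply 0).aestronglyMeasurable).symm
    _ = ∫ ω, Y 0 ω ∂μ := by rw [hshift.map_eq, h_eval]

lemma nhdsWithin_Icc_diff_singleton_neBot {a b v : ℝ} (hab : a < b) (hv : v ∈ Icc a b) :
    (𝓝[Icc a b \ {v}] v).NeBot := by
  rcases hv.2.lt_or_eq with hvb | rfl
  · exact (left_nhdsWithin_Ioo_neBot hvb).mono <| nhdsWithin_mono _
      fun x hx => ⟨⟨hv.1.trans hx.1.le, hx.2.le⟩, hx.1.ne'⟩
  · exact (right_nhdsWithin_Ioo_neBot hab).mono <| nhdsWithin_mono _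
      fun x hx => ⟨⟨hx.1.le, hx.2.le⟩, hx.2.ne⟩

section Integral

variable {Ω : Type*} [MeasurableSpace Ω] {μ : Measure Ω} {F F' : ℝ → Ω → ℝ}

lemma aestronglyMeasurable_of_hasDerivWithinAt {f' : Ω → ℝ} {s : Set ℝ} {v : ℝ}
    [(𝓝[s \ {v}] v).NeBot] (hF : ∀ w, AEStronglyMeasurable (F w) μ)
    (h : ∀ᵐ ω ∂μ, HasDerivWithinAt (F · ω) (f' ω) s v) : AEStronglyMeasurable f' μ := by
  refine (aemeasurable_of_tendsto_metrizable_ae (𝓝[s \ {v}] v)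
    (f := fun w ω => slope (F · ω) v w) (fun w => ?_) ?_).aestronglyMeasurable
  · simpa only [slope_def_field, Pi.sub_apply] using
      ((hF w).aemeasurable.sub (hF v).aemeasurable).div_const (w - v)
  · filter_upwards [h] with ω hω
    exact hasDerivWithinAt_iff_tendsto_slope.1 hω

lemma aestronglyMeasurable_iSup_abs {s : Set ℝ} (hs : s.Nonempty)
    (hF' : ∀ v ∈ s, AEStronglyMeasurable (F' v) μ)
    (hcont : ∀ᵐ ω ∂μ, ContinuousOn (F' · ω) s) :
    AEStronglyMeasurable (fun ω => ⨆ v : s, |F' v ω|) μ := by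
  have := hs.to_subtype
  set e := TopologicalSpace.denseSeq s
  have hmeas : AEMeasurable (fun ω => ⨆ k, |F' (e k) ω|) μ :=
    AEMeasurable.iSup fun k => measurable_abs.comp_aemeasurable (hF' _ (e k).2).aemeasurable
  refine hmeas.aestronglyMeasurable.congr ?_
  filter_upwards [hcont] with ω hω
  have hsup := (TopologicalSpace.denseRange_denseSeq s).ciSup'
    (continuousOn_iff_continuous_domRestrict.1 hω.abs)
  rw [iSup_range'] at hsup
  exact hsup

lemma hasDerivWithinAt_integral_of_dominated {s : Set ℝ} {bound : Ω → ℝ} (hs : Convex ℝ s)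
    (hF_int : ∀ v ∈ s, Integrable (F v) μ)
    (h_diff : ∀ᵐ ω ∂μ, ∀ v ∈ s, HasDerivWithinAt (F · ω) (F' v ω) s v)
    (h_bound : ∀ᵐ ω ∂μ, ∀ v ∈ s, |F' v ω| ≤ bound ω) (h_int : Integrable bound μ)
    {v : ℝ} (hv : v ∈ s) :
    HasDerivWithinAt (fun w => ∫ ω, F w ω ∂μ) (∫ ω, F' v ω ∂μ) s v := by
  rw [hasDerivWithinAt_iff_tendsto_slope]
  have h_meas : ∀ᶠ w in 𝓝[s \ {v}] v, AEStronglyMeasurable (fun ω => slope (F · ω) v w) μ := by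
    filter_upwards [self_mem_nhdsWithin] with w hw
    simpa only [slope_def_field, Pi.sub_apply] using
      (((hF_int w hw.1).sub (hF_int v hv)).div_const (w - v)).aestronglyMeasurable
  have h_slope_le : ∀ᶠ w in 𝓝[s \ {v}] v, ∀ᵐ ω ∂μ, ‖slope (F · ω) v w‖ ≤ bound ω := by
    filter_upwards [self_mem_nhdsWithin] with w hw
    filter_upwards [h_diff, h_bound] with ω hω hωb
    have hlip := hs.norm_image_sub_le_of_norm_hasDerivWithin_le (fun x hx => hω x hx)
      (fun x hx => hωb x hx) hv hw.1
    have hwv : 0 < |w - v| := abs_pos.2 (sub_ne_zero.2 hw.2)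
    rw [slope_def_field, Real.norm_eq_abs, abs_div, div_le_iff₀ hwv]
    simpa only [Real.norm_eq_abs] using hlip
  have h_lim : ∀ᵐ ω ∂μ, Tendsto (fun w => slope (F · ω) v w) (𝓝[s \ {v}] v) (𝓝 (F' v ω)) := by
    filter_upwards [h_diff] with ω hω
    exact hasDerivWithinAt_iff_tendsto_slope.1 (hω v hv)
  refine (tendsto_integral_filter_of_dominated_convergence bound h_meas h_slope_le h_int
    h_lim).congr' ?_
  filter_upwards [self_mem_nhdsWithin] with w hw
  simp only [slope_def_field]
  rw [integral_div, integral_sub (hF_int w hw.1) (hF_int v hv)]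

theorem integral_hasDerivWithinAt_and_continuousOn [IsFiniteMeasure μ] {a b : ℝ} (hab : a < b)
    {p : ENNReal} (hp : 1 ≤ p) (hF_meas : ∀ v, AEStronglyMeasurable (F v) μ)
    (hF_int : ∀ v ∈ Icc a b, Integrable (F v) μ)
    (h_diff : ∀ᵐ ω ∂μ, (∀ v ∈ Icc a b, HasDerivWithinAt (F · ω) (F' v ω) (Icc a b) v) ∧
      ContinuousOn (F' · ω) (Icc a b))
    (h_sup : eLpNorm (fun ω => ⨆ v : Icc a b, |F' v ω|) p μ < ⊤) :
    (∀ v ∈ Icc a b, HasDerivWithinAt (fun w => ∫ ω, F w ω ∂μ) (∫ ω, F' v ω ∂μ) (Icc a b) v) ∧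
      ContinuousOn (fun v => ∫ ω, F' v ω ∂μ) (Icc a b) := by
  have hF'_meas (v : ℝ) (hv : v ∈ Icc a b) : AEStronglyMeasurable (F' v) μ :=
    have := nhdsWithin_Icc_diff_singleton_neBot hab hv
    aestronglyMeasurable_of_hasDerivWithinAt hF_meas (h_diff.mono fun _ hω => hω.1 v hv)
  have h_bound : ∀ᵐ ω ∂μ, ∀ v ∈ Icc a b, |F' v ω| ≤ ⨆ v : Icc a b, |F' v ω| := by
    filter_upwards [h_diff] with ω hω v hv
    have hbdd := (isCompact_Icc.image_of_continuousOn hω.2.abs).bddAbove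
    rw [image_eq_range] at hbdd
    exact le_ciSup hbdd ⟨v, hv⟩
  have h_int : Integrable (fun ω => ⨆ v : Icc a b, |F' v ω|) μ :=
    MemLp.integrable hp ⟨aestronglyMeasurable_iSup_abs (nonempty_Icc.2 hab.le) hF'_meas
      (h_diff.mono fun _ hω => hω.2), h_sup⟩
  exact ⟨fun v hv => hasDerivWithinAt_integral_of_dominated (convex_Icc a b) hF_int
      (h_diff.mono fun _ hω => hω.1) h_bound h_int hv,
    continuousOn_of_dominated hF'_meas (fun v hv => h_bound.mono fun _ hω => hω v hv) h_int
      (h_diff.mono fun _ hω => hω.2)⟩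

end Integral

lemma BoundedVariationOn.intervalIntegrable {f : ℝ → ℝ} {a b : ℝ}
    (hf : BoundedVariationOn f (uIcc a b)) : IntervalIntegrable f volume a b := by
  obtain ⟨p, q, hp, hq, rfl⟩ := hf.locallyBoundedVariationOn.exists_monotoneOn_sub_monotoneOn
  exact hp.intervalIntegrable.sub hq.intervalIntegrable

lemma abs_mul_sub_intervalIntegral_le {f : ℝ → ℝ} {a c : ℝ} (hac : a ≤ c)
    (hf : BoundedVariationOn f (Icc a c)) :
    |(c - a) * f c - ∫ x in a..c, f x| ≤ (c - a) * (eVariationOn f (Icc a c)).toReal := by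
  have hint : IntervalIntegrable f volume a c :=
    BoundedVariationOn.intervalIntegrable (by rwa [uIcc_of_le hac])
  have hsub : (c - a) * f c - ∫ x in a..c, f x = ∫ x in a..c, (f c - f x) := by
    rw [intervalIntegral.integral_sub intervalIntegrable_const hint,
      intervalIntegral.integral_const, smul_eq_mul]
  rw [hsub, ← Real.norm_eq_abs, mul_comm, ← abs_of_nonneg (sub_nonneg.2 hac)]
  refine intervalIntegral.norm_integral_le_of_norm_le_const fun x hx => ?_
  rw [uIoc_of_le hac] at hx
  rw [Real.norm_eq_abs, ← Real.dist_eq]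
  exact hf.dist_le (right_mem_Icc.2 hac) (Ioc_subset_Icc_self hx)

theorem abs_riemannSum_sub_intervalIntegral_le {f : ℝ → ℝ} (hf : BoundedVariationOn f (Icc 0 1))
    {n : ℕ} (hn : 0 < n) :
    |(n : ℝ)⁻¹ * ∑ t ∈ Finset.Icc 1 n, f (t / n) - ∫ x in (0 : ℝ)..1, f x|
      ≤ (n : ℝ)⁻¹ * (eVariationOn f (Icc 0 1)).toReal := by
  have hn' : (0 : ℝ) < n := by exact_mod_cast hn
  set a : ℕ → ℝ := fun i => i / n
  have ha_mono : Monotone a := fun i j hij => by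
    simp only [a]; gcongr
  have ha0 : a 0 = 0 := by simp [a]
  have han : a n = 1 := div_self hn'.ne'
  have hlen (i : ℕ) : a (i + 1) - a i = (n : ℝ)⁻¹ := by
    simp only [a]; push_cast; field_simp; ring
  have hpiece (i : ℕ) (hi : i < n) : BoundedVariationOn f (Icc (a i) (a (i + 1))) :=
    hf.mono (Icc_subset_Icc (ha0 ▸ ha_mono (Nat.zero_le i)) (han ▸ ha_mono hi))
  have hfin (i : ℕ) (hi : i < n) : eVariationOn f (Icc (a i) (a (i + 1))) ≠ ⊤ := hpiece i hi
  have hsum : ∑ t ∈ Finset.Icc 1 n, f (t / n) = ∑ i ∈ Finset.range n, f (a (i + 1)) := by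
    rw [Finset.range_eq_Ico, Finset.sum_Ico_add' (fun t => f (a t)), zero_add,
      Finset.Ico_add_one_right_eq_Icc]
  have hint : ∫ x in (0 : ℝ)..1, f x = ∑ i ∈ Finset.range n, ∫ x in a i..a (i + 1), f x := by
    rw [intervalIntegral.sum_integral_adjacent_intervals fun i hi =>
      BoundedVariationOn.intervalIntegrable <| (uIcc_of_le (ha_mono i.le_succ)).symm ▸ hpiece i hi,
      ha0, han]
  have hvar : ∑ i ∈ Finset.range n, (eVariationOn f (Icc (a i) (a (i + 1)))).toReal
      = (eVariationOn f (Icc 0 1)).toReal := by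
    rw [← ENNReal.toReal_sum fun i hi => hfin i (Finset.mem_range.1 hi),
      eVariationOn.sum' f ha_mono, ha0, han]
  calc |(n : ℝ)⁻¹ * ∑ t ∈ Finset.Icc 1 n, f (t / n) - ∫ x in (0 : ℝ)..1, f x|
      = |∑ i ∈ Finset.range n,
          ((a (i + 1) - a i) * f (a (i + 1)) - ∫ x in a i..a (i + 1), f x)| := by
        simp only [hsum, hint, hlen, Finset.mul_sum, Finset.sum_sub_distrib]
    _ ≤ ∑ i ∈ Finset.range n,
          (a (i + 1) - a i) * (eVariationOn f (Icc (a i) (a (i + 1)))).toReal :=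
        (Finset.abs_sum_le_sum_abs _ _).trans <| Finset.sum_le_sum fun i hi =>
          abs_mul_sub_intervalIntegral_le (ha_mono i.le_succ) (hpiece i (Finset.mem_range.1 hi))
    _ = (n : ℝ)⁻¹ * (eVariationOn f (Icc 0 1)).toReal := by
        simp only [hlen, ← Finset.mul_sum, hvar]

lemma card_filter_abs_natCast_div_sub_le (s : Finset ℕ) {n : ℕ} (hn : 0 < n) (u : ℝ) {r : ℝ}
    (hr : 0 ≤ r) : ((s.filter fun t : ℕ => |(t : ℝ) / n - u| ≤ r).card : ℝ) ≤ 2 * n * r + 1 := by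
  have hn' : (0 : ℝ) < n := by exact_mod_cast hn
  set lo := ⌈n * (u - r)⌉
  set hi := ⌊n * (u + r)⌋
  have hmaps : ∀ t ∈ s.filter fun t : ℕ => |(t : ℝ) / n - u| ≤ r, (t : ℤ) ∈ Finset.Icc lo hi := by
    intro t ht
    have ht := abs_le.1 (Finset.mem_filter.1 ht).2
    rw [Finset.mem_Icc, Int.ceil_le, Int.le_floor, Int.cast_natCast]
    constructor
    · rw [← le_div_iff₀' hn']; linarith
    · rw [← div_le_iff₀' hn']; linarith
  have hcard := Finset.card_le_card_of_injOn _ hmaps Nat.cast_injective.injOn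
  rw [Int.card_Icc] at hcard
  calc ((s.filter fun t : ℕ => |(t : ℝ) / n - u| ≤ r).card : ℝ)
      ≤ (((hi + 1 - lo).toNat : ℤ) : ℝ) := by exact_mod_cast hcard
    _ ≤ 2 * n * r + 1 := by
      rw [Int.toNat_eq_max, Int.cast_max]
      refine max_le ?_ (by push_cast; positivity)
      have h₁ : (hi : ℝ) ≤ n * (u + r) := Int.floor_le _
      have h₂ : n * (u - r) ≤ (lo : ℝ) := Int.le_ceil _
      push_cast
      linarith

section Kernel

variable {K : ℝ → ℝ} {Kinf b u : ℝ}

lemma abs_sub_le_of_kernel_ne_zero (hsupp : Function.support K ⊆ Icc (-(1 / 2)) (1 / 2))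
    (hb : 0 < b) {x : ℝ} (hx : K ((x - u) / b) ≠ 0) : |x - u| ≤ b / 2 := by
  have hx' := hsupp hx
  rw [mem_Icc, ← abs_le, abs_div, abs_of_pos hb, div_le_iff₀ hb] at hx'
  linarith

lemma eVariationOn_kernel_le (hb : 0 < b) (s : Set ℝ) :
    eVariationOn (fun x => b⁻¹ * K ((x - u) / b)) s ≤ ENNReal.ofReal b⁻¹ * eVariationOn K univ := by
  have hscale : eVariationOn (fun x => K ((x - u) / b)) s ≤ eVariationOn K univ :=
    eVariationOn.comp_le_of_monotoneOn K (fun x => (x - u) / b)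
      (fun x _ y _ hxy => by dsimp only; gcongr) (mapsTo_univ _ _)
  calc eVariationOn (fun x => b⁻¹ * K ((x - u) / b)) s
      ≤ ENNReal.ofReal b⁻¹ * eVariationOn (fun x => K ((x - u) / b)) s
        + ⊤ * eVariationOn (fun _ => b⁻¹) s :=
        eVariationOn_fun_mul_le (fun _ _ => (Real.enorm_eq_ofReal (inv_nonneg.2 hb.le)).le)
          (fun _ _ => le_top)
    _ ≤ ENNReal.ofReal b⁻¹ * eVariationOn K univ := by
        rw [eVariationOn.constant_on (f := fun _ => b⁻¹) (s := s)
          (by rintro _ ⟨_, _, rfl⟩ _ ⟨_, _, rfl⟩; rfl), mul_zero, add_zero]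
        gcongr

lemma integral_kernel_mul_sub_eq_zero (hsupp : Function.support K ⊆ Icc (-(1 / 2)) (1 / 2))
    (hsymm : ∀ x, K (-x) = K x) (hb : 0 < b) (hu : u ∈ Icc (b / 2) (1 - b / 2)) :
    ∫ x in (0 : ℝ)..1, b⁻¹ * K ((x - u) / b) * (x - u) = 0 := by
  set ψ : ℝ → ℝ := fun y => b⁻¹ * K (y / b) * y
  have hψ : ∫ y, ψ y = 0 := by
    have hodd := integral_neg_eq_self ψ volume
    simp only [ψ, neg_div, hsymm, mul_neg, integral_neg] at hodd
    linarith
  have hvanish (x : ℝ) (hx : x ∉ Icc (0 : ℝ) 1) : ψ (x - u) = 0 := by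
    by_contra hne
    have hK : K ((x - u) / b) ≠ 0 := fun h => hne (by simp [ψ, h])
    have := abs_le.1 (abs_sub_le_of_kernel_ne_zero hsupp hb hK)
    exact hx ⟨by linarith [hu.1], by linarith [hu.2]⟩
  calc ∫ x in (0 : ℝ)..1, b⁻¹ * K ((x - u) / b) * (x - u)
      = ∫ x in Icc 0 1, ψ (x - u) := by
        rw [intervalIntegral.integral_of_le zero_le_one, integral_Icc_eq_integral_Ioc]
    _ = ∫ y, ψ y := by
        rw [setIntegral_eq_integral_of_forall_compl_eq_zero hvanish, integral_sub_right_eq_self]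
    _ = 0 := hψ

lemma eVariationOn_kernel_mul_sub_le (hKb : ∀ x, |K x| ≤ Kinf)
    (hsupp : Function.support K ⊆ Icc (-(1 / 2)) (1 / 2)) (hb : 0 < b) (a c : ℝ) :
    eVariationOn (fun x => b⁻¹ * K ((x - u) / b) * (x - u)) (Icc a c)
      ≤ ENNReal.ofReal Kinf + eVariationOn K univ := by
  have hKinf : 0 ≤ Kinf := (abs_nonneg _).trans (hKb 0)
  -- On the kernel's support `x - u` equals its clamp to `[-b/2, b/2]`, whose variation is only
  -- `b`; this is what makes the bound uniform in `b`.
  set clamp : ℝ → ℝ := fun x => max (-(b / 2)) (min (x - u) (b / 2))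
  have heq : EqOn (fun x => b⁻¹ * K ((x - u) / b) * (x - u))
      ((fun x => b⁻¹ * K ((x - u) / b)) * clamp) (Icc a c) := by
    intro x _
    by_cases hK : K ((x - u) / b) = 0
    · simp [hK]
    · have hx := abs_le.1 (abs_sub_le_of_kernel_ne_zero hsupp hb hK)
      simp [clamp, min_eq_left hx.2, max_eq_right hx.1]
  have hclamp : eVariationOn clamp (Icc a c) ≤ ENNReal.ofReal b := by
    have hmono : Monotone clamp := fun x y hxy => by
      simp only [clamp]; gcongr
    have := (hmono.monotoneOn univ).eVariationOn_eq (mem_univ a) (mem_univ c)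
    rw [univ_inter] at this
    refine this.trans_le (ENNReal.ofReal_le_ofReal ?_)
    have h₁ : clamp c ≤ b / 2 := max_le (by linarith) (min_le_right _ _)
    have h₂ : -(b / 2) ≤ clamp a := le_max_left _ _
    linarith
  have hweight (x : ℝ) (_ : x ∈ Icc a c) :
      ‖b⁻¹ * K ((x - u) / b)‖ₑ ≤ ENNReal.ofReal (b⁻¹ * Kinf) := by
    rw [Real.enorm_eq_ofReal_abs, abs_mul, abs_of_pos (inv_pos.2 hb)]
    gcongr
    exact hKb _
  have hclamp_le (x : ℝ) (_ : x ∈ Icc a c) : ‖clamp x‖ₑ ≤ ENNReal.ofReal (b / 2) := by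
    rw [Real.enorm_eq_ofReal_abs]
    gcongr
    exact abs_le.2 ⟨le_max_left _ _, max_le (by linarith) (min_le_right _ _)⟩
  rw [eVariationOn.congr heq]
  calc eVariationOn ((fun x => b⁻¹ * K ((x - u) / b)) * clamp) (Icc a c)
      ≤ ENNReal.ofReal (b⁻¹ * Kinf) * eVariationOn clamp (Icc a c)
        + ENNReal.ofReal (b / 2) * eVariationOn (fun x => b⁻¹ * K ((x - u) / b)) (Icc a c) :=
        eVariation_mul_le hweight hclamp_le
    _ ≤ ENNReal.ofReal (b⁻¹ * Kinf) * ENNReal.ofReal b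
        + ENNReal.ofReal (b / 2) * (ENNReal.ofReal b⁻¹ * eVariationOn K univ) := by
        gcongr
        exact eVariationOn_kernel_le hb _
    _ = ENNReal.ofReal Kinf + ENNReal.ofReal 2⁻¹ * eVariationOn K univ := by
        rw [← mul_assoc, ← ENNReal.ofReal_mul (by positivity), ← ENNReal.ofReal_mul (by positivity)]
        congr 3 <;> field_simp
    _ ≤ ENNReal.ofReal Kinf + eVariationOn K univ := by
        gcongr
        exact mul_le_of_le_one_left zero_le (ENNReal.ofReal_le_one.2 (by norm_num))

lemma sum_abs_kernel_le (hKb : ∀ x, |K x| ≤ Kinf)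
    (hsupp : Function.support K ⊆ Icc (-(1 / 2)) (1 / 2)) (hb : 0 < b) {n : ℕ} (hn : 0 < n) :
    ∑ t ∈ Finset.Icc 1 n, |b⁻¹ * K ((t / n - u) / b)| ≤ Kinf * (n + b⁻¹) := by
  have hKinf : 0 ≤ Kinf := (abs_nonneg _).trans (hKb 0)
  set near := (Finset.Icc 1 n).filter fun t : ℕ => |(t : ℝ) / n - u| ≤ b / 2
  rw [← Finset.sum_filter_of_ne (p := fun t : ℕ => |(t : ℝ) / n - u| ≤ b / 2) fun t _ ht =>
    abs_sub_le_of_kernel_ne_zero hsupp hb fun hK => ht (by simp [hK])]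
  calc ∑ t ∈ near, |b⁻¹ * K ((t / n - u) / b)|
      ≤ ∑ _t ∈ near, b⁻¹ * Kinf :=
        Finset.sum_le_sum fun t _ => by
          rw [abs_mul, abs_of_pos (inv_pos.2 hb)]
          exact mul_le_mul_of_nonneg_left (hKb _) (inv_nonneg.2 hb.le)
    _ = near.card * (b⁻¹ * Kinf) := by rw [Finset.sum_const, nsmul_eq_mul]
    _ ≤ (2 * n * (b / 2) + 1) * (b⁻¹ * Kinf) := by
        gcongr
        exact card_filter_abs_natCast_div_sub_le _ hn u (by positivity)
    _ = Kinf * (n + b⁻¹) := by field_simp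

lemma abs_kernel_riemannSum_le (hKb : ∀ x, |K x| ≤ Kinf)
    (hbv : BoundedVariationOn K univ) (hsupp : Function.support K ⊆ Icc (-(1 / 2)) (1 / 2))
    (hsymm : ∀ x, K (-x) = K x) (hb : 0 < b) (hu : u ∈ Icc (b / 2) (1 - b / 2))
    {n : ℕ} (hn : 0 < n) :
    |(n : ℝ)⁻¹ * ∑ t ∈ Finset.Icc 1 n, b⁻¹ * K ((t / n - u) / b) * (t / n - u)|
      ≤ (Kinf + (eVariationOn K univ).toReal) * (n : ℝ)⁻¹ := by
  have hKinf : 0 ≤ Kinf := (abs_nonneg _).trans (hKb 0)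
  have hvar := eVariationOn_kernel_mul_sub_le (u := u) hKb hsupp hb 0 1
  have hfin : ENNReal.ofReal Kinf + eVariationOn K univ ≠ ⊤ :=
    ENNReal.add_ne_top.2 ⟨ENNReal.ofReal_ne_top, hbv⟩
  have hriemann := abs_riemannSum_sub_intervalIntegral_le (ne_top_of_le_ne_top hfin hvar) hn
  rw [integral_kernel_mul_sub_eq_zero hsupp hsymm hb hu, sub_zero] at hriemann
  refine hriemann.trans ?_
  rw [mul_comm]
  gcongr
  calc _ ≤ (ENNReal.ofReal Kinf + eVariationOn K univ).toReal := ENNReal.toReal_mono hfin hvar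
    _ = Kinf + (eVariationOn K univ).toReal := by
      rw [ENNReal.toReal_add ENNReal.ofReal_ne_top hbv, ENNReal.toReal_ofReal hKinf]

end Kernel

def modulusOn (G : ℝ → ℝ) (s : Set ℝ) (δ : ℝ) : ℝ :=
  sSup {d | ∃ x ∈ s, ∃ y ∈ s, |x - y| ≤ δ ∧ |G x - G y| = d}

section Modulus

variable {G : ℝ → ℝ} {s : Set ℝ}

lemma modulusOn_nonneg (δ : ℝ) : 0 ≤ modulusOn G s δ :=
  Real.sSup_nonneg <| by rintro _ ⟨x, -, y, -, -, rfl⟩; exact abs_nonneg _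

lemma abs_sub_le_modulusOn (hs : IsCompact s) (hG : ContinuousOn G s) {x y δ : ℝ} (hx : x ∈ s)
    (hy : y ∈ s) (hxy : |x - y| ≤ δ) : |G x - G y| ≤ modulusOn G s δ := by
  obtain ⟨D, hD⟩ := hs.exists_bound_of_continuousOn hG
  refine le_csSup ⟨2 * D, ?_⟩ ⟨x, hx, y, hy, hxy, rfl⟩
  rintro _ ⟨x, hx, y, hy, -, rfl⟩
  have hDx := hD x hx
  have hDy := hD y hy
  rw [Real.norm_eq_abs] at hDx hDy
  linarith [abs_sub (G x) (G y)]

lemma tendsto_modulusOn (hs : IsCompact s) (hG : ContinuousOn G s) :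
    Tendsto (modulusOn G s) (𝓝[>] 0) (𝓝 0) := by
  rw [Metric.tendsto_nhdsWithin_nhds]
  intro ε hε
  obtain ⟨δ, hδ, hU⟩ := Metric.uniformContinuousOn_iff.1
    (hs.uniformContinuousOn_of_continuous hG) (ε / 2) (half_pos hε)
  refine ⟨δ, hδ, fun r hr hrδ => ?_⟩
  rw [Real.dist_eq, sub_zero, abs_of_pos (mem_Ioi.1 hr)] at hrδ
  rw [Real.dist_eq, sub_zero, abs_of_nonneg (modulusOn_nonneg r)]
  refine (Real.sSup_le ?_ (half_pos hε).le).trans_lt (half_lt_self hε)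
  rintro _ ⟨x, hx, y, hy, hxy, rfl⟩
  exact (hU x hx y hy (by rw [Real.dist_eq]; linarith)).le

end Modulus

lemma abs_sub_sub_mul_le_of_hasDerivWithinAt {g G : ℝ → ℝ} {s : Set ℝ} (hs : Convex ℝ s)
    (hg : ∀ w ∈ s, HasDerivWithinAt g (G w) s w) {u y ε : ℝ} (hu : u ∈ s) (hy : y ∈ s)
    (hG : ∀ w ∈ s, |w - u| ≤ |y - u| → |G w - G u| ≤ ε) :
    |g y - g u - G u * (y - u)| ≤ ε * |y - u| := by
  have hsub : uIcc u y ⊆ s := hs.ordConnected.uIcc_subset hu hy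
  have hmvt := (convex_uIcc u y).norm_image_sub_le_of_norm_hasDerivWithin_le
    (f := fun w => g w - G u * w) (f' := fun w => G w - G u)
    (fun w hw => ((hg w (hsub hw)).mono hsub).sub
      (by simpa using (hasDerivWithinAt_id w _).const_mul (G u)))
    (fun w hw => hG w (hsub hw) (abs_sub_left_of_mem_uIcc hw)) left_mem_uIcc right_mem_uIcc
  simp only [Real.norm_eq_abs] at hmvt
  convert hmvt using 2
  ring

section Bias

variable {g G K : ℝ → ℝ} {Kinf : ℝ}

lemma abs_kernel_bias_le (hg : ∀ v ∈ Icc (0 : ℝ) 1, HasDerivWithinAt g (G v) (Icc 0 1) v)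
    {D : ℝ} (hD : ∀ v ∈ Icc (0 : ℝ) 1, |G v| ≤ D) {b ε : ℝ}
    (hε : ∀ x ∈ Icc (0 : ℝ) 1, ∀ y ∈ Icc (0 : ℝ) 1, |x - y| ≤ b → |G x - G y| ≤ ε)
    (hKb : ∀ x, |K x| ≤ Kinf) (hbv : BoundedVariationOn K univ)
    (hsupp : Function.support K ⊆ Icc (-(1 / 2)) (1 / 2)) (hsymm : ∀ x, K (-x) = K x)
    {n : ℕ} (hn : 0 < n) (hb : 0 < b) (hnb : 1 ≤ (n : ℝ) * b) {u : ℝ}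
    (hu : u ∈ Icc (b / 2) (1 - b / 2)) :
    |(n : ℝ)⁻¹ * ∑ t ∈ Finset.Icc 1 n, b⁻¹ * K ((t / n - u) / b) * (g (t / n) - g u)|
      ≤ Kinf * ε * b + D * (Kinf + (eVariationOn K univ).toReal) * (n : ℝ)⁻¹ := by
  have hn' : (0 : ℝ) < n := by exact_mod_cast hn
  have hKinf : 0 ≤ Kinf := (abs_nonneg _).trans (hKb 0)
  have hu01 : u ∈ Icc (0 : ℝ) 1 := ⟨by linarith [hu.1], by linarith [hu.2]⟩
  have hε0 : 0 ≤ ε := by simpa using hε u hu01 u hu01 (by simp [hb.le])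
  set w : ℕ → ℝ := fun t => b⁻¹ * K ((t / n - u) / b)
  set r : ℕ → ℝ := fun t => g (t / n) - g u - G u * (t / n - u)
  have hr (t : ℕ) (ht : t ∈ Finset.Icc 1 n) : |w t * r t| ≤ |w t| * (ε * (b / 2)) := by
    by_cases hK : K ((t / n - u) / b) = 0
    · simp [w, hK]
    have hclose := abs_sub_le_of_kernel_ne_zero hsupp hb hK
    have ht01 : (t : ℝ) / n ∈ Icc (0 : ℝ) 1 :=
      ⟨by positivity, div_le_one_of_le₀ (by exact_mod_cast (Finset.mem_Icc.1 ht).2) hn'.le⟩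
    have htaylor := abs_sub_sub_mul_le_of_hasDerivWithinAt (convex_Icc 0 1) hg hu01 ht01
      fun v hv hvu => hε v hv u hu01 (by linarith)
    rw [abs_mul]
    gcongr
    exact htaylor.trans (by gcongr)
  have hmean : (n : ℝ)⁻¹ * (n + b⁻¹) ≤ 2 := by
    rw [mul_add, inv_mul_cancel₀ hn'.ne', ← mul_inv]
    linarith [inv_le_one_of_one_le₀ hnb]
  calc |(n : ℝ)⁻¹ * ∑ t ∈ Finset.Icc 1 n, w t * (g (t / n) - g u)|
      = |G u * ((n : ℝ)⁻¹ * ∑ t ∈ Finset.Icc 1 n, w t * (t / n - u))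
          + (n : ℝ)⁻¹ * ∑ t ∈ Finset.Icc 1 n, w t * r t| := by
        simp only [Finset.mul_sum, ← Finset.sum_add_distrib, r]
        congr 1
        exact Finset.sum_congr rfl fun t _ => by ring
    _ ≤ |G u| * |(n : ℝ)⁻¹ * ∑ t ∈ Finset.Icc 1 n, w t * (t / n - u)|
          + (n : ℝ)⁻¹ * ∑ t ∈ Finset.Icc 1 n, |w t| * (ε * (b / 2)) := by
        refine (abs_add_le _ _).trans ?_
        rw [abs_mul (G u), abs_mul (n : ℝ)⁻¹ (∑ t ∈ Finset.Icc 1 n, w t * r t),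
          abs_of_pos (inv_pos.2 hn')]
        gcongr
        exact (Finset.abs_sum_le_sum_abs _ _).trans (Finset.sum_le_sum hr)
    _ ≤ D * ((Kinf + (eVariationOn K univ).toReal) * (n : ℝ)⁻¹)
          + (n : ℝ)⁻¹ * (Kinf * (n + b⁻¹)) * (ε * (b / 2)) := by
        rw [← Finset.sum_mul, ← mul_assoc]
        gcongr
        · exact (abs_nonneg _).trans (hD u hu01)
        · exact hD u hu01
        · exact abs_kernel_riemannSum_le hKb hbv hsupp hsymm hb hu hn
        · exact sum_abs_kernel_le hKb hsupp hb hn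
    _ ≤ Kinf * ε * b + D * (Kinf + (eVariationOn K univ).toReal) * (n : ℝ)⁻¹ := by
        have : (n : ℝ)⁻¹ * (Kinf * (n + b⁻¹)) * (ε * (b / 2))
            = Kinf * ε * (b / 2) * ((n : ℝ)⁻¹ * (n + b⁻¹)) := by ring
        rw [this]
        nlinarith [mul_nonneg (mul_nonneg hKinf hε0) hb.le]

end Bias

theorem exists_kernel_bias_bound {g G K : ℝ → ℝ} {Kinf : ℝ}
    (hg : ∀ v ∈ Icc (0 : ℝ) 1, HasDerivWithinAt g (G v) (Icc 0 1) v)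
    (hG : ContinuousOn G (Icc 0 1)) (hKb : ∀ x, |K x| ≤ Kinf) (hbv : BoundedVariationOn K univ)
    (hsupp : Function.support K ⊆ Icc (-(1 / 2)) (1 / 2)) (hsymm : ∀ x, K (-x) = K x) :
    ∃ C : ℝ, 0 < C ∧ ∃ η : ℝ → ℝ, (∀ b ∈ Ioo (0 : ℝ) 1, 0 ≤ η b) ∧
      Tendsto η (𝓝[>] (0 : ℝ)) (𝓝 0) ∧
      ∀ n : ℕ, 1 ≤ n → ∀ b : ℝ, b ∈ Ioo (0 : ℝ) 1 → 1 ≤ (n : ℝ) * b →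
        ∀ u ∈ Icc (b / 2) (1 - b / 2),
          |(n : ℝ)⁻¹ * ∑ t ∈ Finset.Icc 1 n, b⁻¹ * K (((t : ℝ) / n - u) / b)
              * (g (t / n) - g u)| ≤ η b * b + C * (n : ℝ)⁻¹ := by
  obtain ⟨D, hD⟩ := isCompact_Icc.exists_bound_of_continuousOn hG
  have hD0 : 0 ≤ D := (norm_nonneg _).trans (hD 0 ⟨le_rfl, zero_le_one⟩)
  have hKinf : 0 ≤ Kinf := (abs_nonneg _).trans (hKb 0)
  refine ⟨D * (Kinf + (eVariationOn K univ).toReal) + 1, by positivity,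
    fun b => Kinf * modulusOn G (Icc 0 1) b, fun b _ => mul_nonneg hKinf (modulusOn_nonneg b),
    by simpa using (tendsto_modulusOn isCompact_Icc hG).const_mul Kinf,
    fun n hn b hb hnb u hu => ?_⟩
  refine (abs_kernel_bias_le hg hD
    (fun x hx y hy hxy => abs_sub_le_modulusOn isCompact_Icc hG hx hy hxy)
    hKb hbv hsupp hsymm hn hb.1 hnb hu).trans ?_
  gcongr
  linarith

theorem deterministic_bias_refined_general {Ω : Type*} [MeasurableSpace Ω] (μ : Measure Ω)
    [IsProbabilityMeasure μ]
    (Xt : ℝ → ℤ → Ω → ℝ) (DX : ℝ → ℤ → Ω → ℝ)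
    (hXtmeas : ∀ u t, Measurable (Xt u t))
    (hstat : ∀ u ∈ Icc (0:ℝ) 1, StatErg μ (fun t => Xt u t))
    (q : ℝ) (hq : 1 ≤ q)
    -- (S1) with α = 1 :
    (hmom : ∃ M : ℝ, ∀ u ∈ Icc (0:ℝ) 1,
      eLpNorm (Xt u 0) (ENNReal.ofReal q) μ ≤ ENNReal.ofReal M)
    -- (S3) :
    (hderiv : ∀ t : ℤ, ∀ᵐ ω ∂μ,
      (∀ u ∈ Icc (0:ℝ) 1,
        HasDerivWithinAt (fun v => Xt v t ω) (DX u t ω) (Icc (0:ℝ) 1) u) ∧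
      ContinuousOn (fun u => DX u t ω) (Icc (0:ℝ) 1))
    (hDmom : ∀ t : ℤ,
      eLpNorm (fun ω => ⨆ u : Icc (0:ℝ) 1, |DX (u : ℝ) t ω|) (ENNReal.ofReal q) μ < ⊤)
    -- kernel, symmetric :
    (K : ℝ → ℝ) (Kinf BK : ℝ) (hK : KernelAssumption K Kinf BK)
    (hKsymm : ∀ x, K (-x) = K x) :
    ∃ C : ℝ, 0 < C ∧ ∃ η : ℝ → ℝ, (∀ b ∈ Ioo (0:ℝ) 1, 0 ≤ η b) ∧
      Tendsto η (𝓝[>] (0:ℝ)) (𝓝 0) ∧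
      ∀ n : ℕ, 1 ≤ n → ∀ b : ℝ, b ∈ Ioo (0:ℝ) 1 → 1 ≤ (n : ℝ) * b →
        ∀ u ∈ Icc (b/2) (1 - b/2),
          |(n : ℝ)⁻¹ * ∑ t ∈ Finset.Icc 1 n, b⁻¹ * K (((t : ℝ) / (n : ℝ) - u) / b)
              * ((∫ ω, Xt ((t : ℝ) / (n : ℝ)) (t : ℤ) ω ∂μ) - ∫ ω, Xt u 0 ω ∂μ)|
            ≤ η b * b + C * (n : ℝ)⁻¹ := by
  have hq' : 1 ≤ ENNReal.ofReal q := ENNReal.one_le_ofReal.2 hq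
  obtain ⟨M, hM⟩ := hmom
  have hint (v : ℝ) (hv : v ∈ Icc (0 : ℝ) 1) : Integrable (Xt v 0) μ :=
    MemLp.integrable hq'
      ⟨(hXtmeas v 0).aestronglyMeasurable, (hM v hv).trans_lt ENNReal.ofReal_lt_top⟩
  obtain ⟨hg, hG⟩ := integral_hasDerivWithinAt_and_continuousOn (F := fun v => Xt v 0)
    zero_lt_one hq' (fun v => (hXtmeas v 0).aestronglyMeasurable) hint (hderiv 0) (hDmom 0)
  obtain ⟨C, hC, η, hη0, hη, hbias⟩ := exists_kernel_bias_bound hg hG hK.bound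
    (ne_top_of_le_ne_top ENNReal.ofReal_ne_top hK.bv) hK.supp hKsymm
  refine ⟨C, hC, η, hη0, hη, fun n hn b hb hnb u hu => ?_⟩
  have hstationary (t : ℕ) (ht : t ∈ Finset.Icc 1 n) :
      ∫ ω, Xt (t / n) t ω ∂μ = ∫ ω, Xt (t / n) 0 ω ∂μ :=
    (hstat _ ⟨by positivity, div_le_one_of_le₀ (by exact_mod_cast (Finset.mem_Icc.1 ht).2)
      n.cast_nonneg⟩).integral_natCast_eq (hXtmeas _) t
  rw [Finset.sum_congr rfl fun t ht => by rw [hstationary t ht]]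
  exact hbias n hn b hb hnb u hu

/-- **Refined deterministic bias expansion** (Proposition 3.3(a)): under (S1) with
`α = 1`, (S3), the kernel assumption and symmetry of `K`, uniformly in
`u ∈ [b/2, 1−b/2]`:
`(1/n)∑ K_b(t/n−u)(E X̃_t(t/n) − E X̃_0(u)) = o(b) + O(n⁻¹)`. -/
theorem deterministic_bias_refined {Ω : Type*} [MeasurableSpace Ω] (μ : Measure Ω)
    [IsProbabilityMeasure μ]
    (X : ℕ → ℕ → Ω → ℝ) (Xt : ℝ → ℤ → Ω → ℝ) (DX : ℝ → ℤ → Ω → ℝ)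
    (hXmeas : ∀ n t, Measurable (X n t))
    (hXtmeas : ∀ u t, Measurable (Xt u t))
    (hstat : ∀ u ∈ Icc (0:ℝ) 1, StatErg μ (fun t => Xt u t))
    (q : ℝ) (hq : 1 ≤ q) (CB : ℝ) (hCB : 0 < CB)
    -- (S1) with α = 1 :
    (hmom : ∃ M : ℝ, ∀ u ∈ Icc (0:ℝ) 1,
      eLpNorm (Xt u 0) (ENNReal.ofReal q) μ ≤ ENNReal.ofReal M)
    (hhoelder : ∀ u ∈ Icc (0:ℝ) 1, ∀ v ∈ Icc (0:ℝ) 1, ∀ t : ℤ,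
      eLpNorm (fun ω => Xt u t ω - Xt v t ω) (ENNReal.ofReal q) μ
        ≤ ENNReal.ofReal (CB * |u - v|))
    (happrox : ∀ n : ℕ, 1 ≤ n → ∀ t : ℕ, 1 ≤ t → t ≤ n →
      eLpNorm (fun ω => X n t ω - Xt ((t : ℝ) / (n : ℝ)) (t : ℤ) ω) (ENNReal.ofReal q) μ
        ≤ ENNReal.ofReal (CB * (n : ℝ)⁻¹))
    -- (S3) :
    (hderiv : ∀ t : ℤ, ∀ᵐ ω ∂μ,
      (∀ u ∈ Icc (0:ℝ) 1,
        HasDerivWithinAt (fun v => Xt v t ω) (DX u t ω) (Icc (0:ℝ) 1) u) ∧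
      ContinuousOn (fun u => DX u t ω) (Icc (0:ℝ) 1))
    (hDmom : ∀ t : ℤ,
      eLpNorm (fun ω => ⨆ u : Icc (0:ℝ) 1, |DX (u : ℝ) t ω|) (ENNReal.ofReal q) μ < ⊤)
    -- kernel, symmetric :
    (K : ℝ → ℝ) (Kinf BK : ℝ) (hK : KernelAssumption K Kinf BK)
    (hKsymm : ∀ x, K (-x) = K x) :
    ∃ C : ℝ, 0 < C ∧ ∃ η : ℝ → ℝ, (∀ b ∈ Ioo (0:ℝ) 1, 0 ≤ η b) ∧
      Tendsto η (𝓝[>] (0:ℝ)) (𝓝 0) ∧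
      ∀ n : ℕ, 1 ≤ n → ∀ b : ℝ, b ∈ Ioo (0:ℝ) 1 → 1 ≤ (n : ℝ) * b →
        ∀ u ∈ Icc (b/2) (1 - b/2),
          |(n : ℝ)⁻¹ * ∑ t ∈ Finset.Icc 1 n, b⁻¹ * K (((t : ℝ) / (n : ℝ) - u) / b)
              * ((∫ ω, Xt ((t : ℝ) / (n : ℝ)) (t : ℤ) ω ∂μ) - ∫ ω, Xt u 0 ω ∂μ)|
            ≤ η b * b + C * (n : ℝ)⁻¹ :=
  deterministic_bias_refined_general μ Xt DX hXtmeas hstat q hq hmom hderiv hDmom K Kinf BK hK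
    hKsymm
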